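/- The quotient of P(f,g) by the two-sided ideal generated by u = d − a is isomorphic as a k-algebra to R_f, via the map induced by a ↦ a, d ↦ a, c ↦ c. -/
import Mathlib


open Polynomial

noncomputable section

/-- Defining relations of `P(f,g)`: with `a = ι 0`, `c = ι 1`, `d = ι 2`,
`a·c = c·a + f(c)`, `d·c = c·d + f(c)`, `d·a = (a − g(c))·d + g(c)·a`. -/
inductive PRel (k : Type) [Field k] (f g : k[X]) :
    FreeAlgebra k (Fin 3) → FreeAlgebra k (Fin 3) → Prop
  | ac : PRel k f g (FreeAlgebra.ι k 0 * FreeAlgebra.ι k 1)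
      (FreeAlgebra.ι k 1 * FreeAlgebra.ι k 0 + aeval (FreeAlgebra.ι k 1) f)
  | dc : PRel k f g (FreeAlgebra.ι k 2 * FreeAlgebra.ι k 1)
      (FreeAlgebra.ι k 1 * FreeAlgebra.ι k 2 + aeval (FreeAlgebra.ι k 1) f)
  | da : PRel k f g (FreeAlgebra.ι k 2 * FreeAlgebra.ι k 0)
      ((FreeAlgebra.ι k 0 - aeval (FreeAlgebra.ι k 1) g) * FreeAlgebra.ι k 2
        + aeval (FreeAlgebra.ι k 1) g * FreeAlgebra.ι k 0)

/-- The algebra `P(f,g)`. -/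
abbrev PAlg (k : Type) [Field k] (f g : k[X]) := RingQuot (PRel k f g)

/-- The generator `a` of `P(f,g)`. -/
def Pa (k : Type) [Field k] (f g : k[X]) : PAlg k f g :=
  RingQuot.mkAlgHom k (PRel k f g) (FreeAlgebra.ι k 0)

/-- The generator `c` of `P(f,g)`. -/
def Pc (k : Type) [Field k] (f g : k[X]) : PAlg k f g :=
  RingQuot.mkAlgHom k (PRel k f g) (FreeAlgebra.ι k 1)

/-- The generator `d` of `P(f,g)`. -/
def Pd (k : Type) [Field k] (f g : k[X]) : PAlg k f g :=
  RingQuot.mkAlgHom k (PRel k f g) (FreeAlgebra.ι k 2)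

/-- The element `u = d - a` of `P(f,g)`. -/
def Pu (k : Type) [Field k] (f g : k[X]) : PAlg k f g := Pd k f g - Pa k f g

/-- Defining relation of the differential operator ring `R_f`: with `a = ι 0`, `c = ι 1`,
`a·c = c·a + f(c)`. -/
inductive RfRel (k : Type) [Field k] (f : k[X]) :
    FreeAlgebra k (Fin 2) → FreeAlgebra k (Fin 2) → Prop
  | ac : RfRel k f (FreeAlgebra.ι k 0 * FreeAlgebra.ι k 1)
      (FreeAlgebra.ι k 1 * FreeAlgebra.ι k 0 + aeval (FreeAlgebra.ι k 1) f)

/-- The differential operator ring `R_f`. -/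
abbrev RfAlg (k : Type) [Field k] (f : k[X]) := RingQuot (RfRel k f)

/-- The generator `a` of `R_f`. -/
def Ra (k : Type) [Field k] (f : k[X]) : RfAlg k f :=
  RingQuot.mkAlgHom k (RfRel k f) (FreeAlgebra.ι k 0)

/-- The generator `c` of `R_f`. -/
def Rc (k : Type) [Field k] (f : k[X]) : RfAlg k f :=
  RingQuot.mkAlgHom k (RfRel k f) (FreeAlgebra.ι k 1)

/-- The relation identifying `u = d - a` with `0`; quotienting `P(f,g)` by it realizes
the quotient by the two-sided ideal generated by `u`. -/
inductive URel (k : Type) [Field k] (f g : k[X]) : PAlg k f g → PAlg k f g → Prop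
  | u : URel k f g (Pu k f g) 0


variable (k : Type) [Field k] (f g : k[X])

/-- Free algebra map to `R_f`: a ↦ Ra, c ↦ Rc, d ↦ Ra. -/
def phi0 : FreeAlgebra k (Fin 3) →ₐ[k] RfAlg k f :=
  FreeAlgebra.lift k ![Ra k f, Rc k f, Ra k f]

lemma Rrel : Ra k f * Rc k f = Rc k f * Ra k f + aeval (Rc k f) f := by
  have := RingQuot.mkAlgHom_rel k (RfRel.ac (k := k) (f := f))
  simpa [Ra, Rc, map_mul, map_add, Polynomial.aeval_algHom_apply] using this

lemma phi0_rel : ∀ ⦃x y⦄, PRel k f g x y → phi0 k f x = phi0 k f y := by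
  intro x y h
  cases h with
  | ac =>
      simp only [phi0, map_mul, map_add, ← Polynomial.aeval_algHom_apply,
        FreeAlgebra.lift_ι_apply, Matrix.cons_val_zero, Matrix.cons_val_one, Matrix.head_cons]
      exact Rrel k f
  | dc =>
      simp only [phi0, map_mul, map_add, ← Polynomial.aeval_algHom_apply,
        FreeAlgebra.lift_ι_apply, Matrix.cons_val_zero, Matrix.cons_val_one, Matrix.head_cons]
      simpa using Rrel k f
  | da =>
      simp only [phi0, map_mul, map_add, map_sub, ← Polynomial.aeval_algHom_apply,
        FreeAlgebra.lift_ι_apply, Matrix.cons_val_zero, Matrix.cons_val_one, Matrix.head_cons,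
        Matrix.cons_val_two, Matrix.tail_cons]
      rw [sub_mul]
      abel

/-- The induced map `P(f,g) → R_f`. -/
def phi : PAlg k f g →ₐ[k] RfAlg k f :=
  RingQuot.liftAlgHom k ⟨phi0 k f, phi0_rel k f g⟩

lemma phi_Pa : phi k f g (Pa k f g) = Ra k f := by
  simp [phi, Pa, RingQuot.liftAlgHom_mkAlgHom_apply, phi0]

lemma phi_Pc : phi k f g (Pc k f g) = Rc k f := by
  simp [phi, Pc, RingQuot.liftAlgHom_mkAlgHom_apply, phi0]

lemma phi_Pd : phi k f g (Pd k f g) = Ra k f := by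
  simp [phi, Pd, RingQuot.liftAlgHom_mkAlgHom_apply, phi0]

/-- The induced map `P(f,g)/(u) → R_f`. -/
def Phi : RingQuot (URel k f g) →ₐ[k] RfAlg k f :=
  RingQuot.liftAlgHom k ⟨phi k f g, by
    intro x y h
    cases h
    simp [Pu, map_sub, phi_Pa, phi_Pd]⟩

/-- Free algebra map `FreeAlgebra k (Fin 2) → P(f,g)/(u)`. -/
def psi0 : FreeAlgebra k (Fin 2) →ₐ[k] RingQuot (URel k f g) :=
  FreeAlgebra.lift k ![RingQuot.mkAlgHom k (URel k f g) (Pa k f g),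
    RingQuot.mkAlgHom k (URel k f g) (Pc k f g)]

lemma Prel : Pa k f g * Pc k f g = Pc k f g * Pa k f g + aeval (Pc k f g) f := by
  have := RingQuot.mkAlgHom_rel k (PRel.ac (k := k) (f := f) (g := g))
  simpa [Pa, Pc, map_mul, map_add, Polynomial.aeval_algHom_apply] using this

/-- The induced map `R_f → P(f,g)/(u)`. -/
def Psi : RfAlg k f →ₐ[k] RingQuot (URel k f g) :=
  RingQuot.liftAlgHom k ⟨psi0 k f g, by
    intro x y h
    cases h
    simp only [psi0, map_mul, map_add, ← Polynomial.aeval_algHom_apply,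
      FreeAlgebra.lift_ι_apply, Matrix.cons_val_zero, Matrix.cons_val_one, Matrix.head_cons]
    have := congrArg (RingQuot.mkAlgHom k (URel k f g)) (Prel k f g)
    simpa only [map_mul, map_add, ← Polynomial.aeval_algHom_apply] using this⟩

lemma Psi_Ra : Psi k f g (Ra k f) = RingQuot.mkAlgHom k (URel k f g) (Pa k f g) := by
  simp [Psi, Ra, RingQuot.liftAlgHom_mkAlgHom_apply, psi0]

lemma Psi_Rc : Psi k f g (Rc k f) = RingQuot.mkAlgHom k (URel k f g) (Pc k f g) := by
  simp [Psi, Rc, RingQuot.liftAlgHom_mkAlgHom_apply, psi0]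

lemma Phi_Pa' : Phi k f g (RingQuot.mkAlgHom k (URel k f g) (Pa k f g)) = Ra k f := by
  simp [Phi, RingQuot.liftAlgHom_mkAlgHom_apply, phi_Pa]

lemma Phi_Pc' : Phi k f g (RingQuot.mkAlgHom k (URel k f g) (Pc k f g)) = Rc k f := by
  simp [Phi, RingQuot.liftAlgHom_mkAlgHom_apply, phi_Pc]

lemma Phi_Pd' : Phi k f g (RingQuot.mkAlgHom k (URel k f g) (Pd k f g)) = Ra k f := by
  simp [Phi, RingQuot.liftAlgHom_mkAlgHom_apply, phi_Pd]

lemma mkU_Pd : RingQuot.mkAlgHom k (URel k f g) (Pd k f g)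
    = RingQuot.mkAlgHom k (URel k f g) (Pa k f g) := by
  have := RingQuot.mkAlgHom_rel k (URel.u (k := k) (f := f) (g := g))
  rw [Pu, map_sub, map_zero, sub_eq_zero] at this
  exact this

lemma Psi_Phi : (Psi k f g).comp (Phi k f g) = AlgHom.id k _ := by
  apply RingQuot.ringQuot_ext' _ _
  apply RingQuot.ringQuot_ext' _ _
  apply FreeAlgebra.hom_ext
  funext i
  fin_cases i <;> simp only [Function.comp_apply, AlgHom.comp_apply, AlgHom.id_apply]
  · exact congrArg (Psi k f g) (Phi_Pa' k f g) |>.trans (Psi_Ra k f g)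
  · exact congrArg (Psi k f g) (Phi_Pc' k f g) |>.trans (Psi_Rc k f g)
  · exact (congrArg (Psi k f g) (Phi_Pd' k f g)).trans
      ((Psi_Ra k f g).trans (mkU_Pd k f g).symm)

lemma Phi_Psi : (Phi k f g).comp (Psi k f g) = AlgHom.id k _ := by
  apply RingQuot.ringQuot_ext' _ _
  apply FreeAlgebra.hom_ext
  funext i
  fin_cases i <;> simp only [Function.comp_apply, AlgHom.comp_apply, AlgHom.id_apply]
  · exact congrArg (Phi k f g) (Psi_Ra k f g) |>.trans (Phi_Pa' k f g)
  · exact congrArg (Phi k f g) (Psi_Rc k f g) |>.trans (Phi_Pc' k f g)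


theorem stmt4 (k : Type) [Field k] [IsAlgClosed k] [CharZero k] (f g : k[X]) :
    ∃ e : RingQuot (URel k f g) ≃ₐ[k] RfAlg k f,
      e (RingQuot.mkAlgHom k (URel k f g) (Pa k f g)) = Ra k f ∧
      e (RingQuot.mkAlgHom k (URel k f g) (Pd k f g)) = Ra k f ∧
      e (RingQuot.mkAlgHom k (URel k f g) (Pc k f g)) = Rc k f := by
  refine ⟨AlgEquiv.ofAlgHom (Phi k f g) (Psi k f g)
    ?_ ?_, Phi_Pa' k f g, Phi_Pd' k f g, Phi_Pc' k f g⟩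
  · exact Phi_Psi k f g
  · exact Psi_Phi k f g
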